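/- arXiv:1505.00459 — 2 statements merged into one kernel-verified Lean document; each statement's English description precedes it below -/
import Mathlib

section
/- Let ‖·‖ be a URTC-norm on ℝ². If φ : ℝ² → ℝ² is a map such that for all x, y ∈ ℝ² with ‖x − y‖ = 1 one has ‖φ(x) − φ(y)‖ = 1, then φ is an affine isometry, i.e., φ is an isometry (‖φ(x) − φ(y)‖ = ‖x − y‖ for all x, y) and φ is an affine map. -/
/-- `N` is a norm on `ℝ²`. -/
structure IsNorm (N : ℝ × ℝ → ℝ) : Prop where
  add_le : ∀ x y : ℝ × ℝ, N (x + y) ≤ N x + N y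
  smul_eq : ∀ (c : ℝ) (x : ℝ × ℝ), N (c • x) = |c| * N x
  eq_zero_of : ∀ x : ℝ × ℝ, N x = 0 → x = 0

/-- `N` is a URTC-norm: for every `a b` at `N`-distance `1`, there are exactly two
points `x` with `N (a - x) = 1` and `N (b - x) = 1`. -/
def IsURTC (N : ℝ × ℝ → ℝ) : Prop :=
  ∀ a b : ℝ × ℝ, N (a - b) = 1 →
    {x : ℝ × ℝ | N (a - x) = 1 ∧ N (b - x) = 1}.encard = 2

/-!
The heart of the argument is that `φ` cannot identify the two apexes `p, q` of a unit segment.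
The unit sphere of `N` is connected, so an intermediate value argument over the apexes of the unit
triangles on `0, u` produces a second apex pair `q, q'` with `N (q' - p) = 1`. If `φ p = φ q`, the
images would contain four points at pairwise unit distance, which a URTC-norm forbids: two apexes
of a unit segment `a, b` always sum to `a + b`.

Hence `φ` maps unit rhombi with a unit diagonal to parallelograms, and its step `φ (a + v) - φ a`
along a unit vector `v` is periodic in the direction `v`. Every vector is a sum of unit vectors, so
`φ` moves points a fixed distance apart by a bounded amount, which forces the steps to be
constant; thus `φ - φ 0` is additive. It is bounded near `0`, hence continuous and `ℝ`-linear, and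
a linear map preserving unit length is an isometry.
-/

open Set

namespace IsNorm

variable {N : ℝ × ℝ → ℝ}

lemma map_zero (hN : IsNorm N) : N 0 = 0 := by
  simpa using hN.smul_eq 0 0

lemma map_neg (hN : IsNorm N) (x : ℝ × ℝ) : N (-x) = N x := by
  simpa using hN.smul_eq (-1) x

lemma map_sub_rev (hN : IsNorm N) (x y : ℝ × ℝ) : N (x - y) = N (y - x) := by
  rw [← neg_sub, hN.map_neg]

lemma nonneg (hN : IsNorm N) (x : ℝ × ℝ) : 0 ≤ N x := by
  have h := hN.add_le x (-x)
  rw [add_neg_cancel, hN.map_zero, hN.map_neg] at h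
  linarith

lemma pos (hN : IsNorm N) {x : ℝ × ℝ} (hx : x ≠ 0) : 0 < N x :=
  (hN.nonneg x).lt_of_ne' fun h => hx (hN.eq_zero_of x h)

lemma map_sub_le (hN : IsNorm N) (x y z : ℝ × ℝ) : N (x - z) ≤ N (x - y) + N (y - z) := by
  simpa using hN.add_le (x - y) (y - z)

lemma map_add_self (hN : IsNorm N) (x : ℝ × ℝ) : N (x + x) = 2 * N x := by
  rw [← two_smul ℝ, hN.smul_eq, abs_two]

lemma ne_zero_of_eq_one (hN : IsNorm N) {x : ℝ × ℝ} (hx : N x = 1) : x ≠ 0 := by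
  rintro rfl
  simp [hN.map_zero] at hx

lemma map_inv_smul_self (hN : IsNorm N) {x : ℝ × ℝ} (hx : x ≠ 0) : N ((N x)⁻¹ • x) = 1 := by
  rw [hN.smul_eq, abs_inv, abs_of_pos (hN.pos hx), inv_mul_cancel₀ (hN.pos hx).ne']

lemma exists_eq_smul_unit (hN : IsNorm N) (z : ℝ × ℝ) : ∃ a, N a = 1 ∧ z = N z • a := by
  by_cases hz : z = 0
  · exact ⟨_, hN.map_inv_smul_self (x := (1, 0)) (by simp), by simp [hz, hN.map_zero]⟩
  · refine ⟨_, hN.map_inv_smul_self hz, ?_⟩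
    rw [smul_smul, mul_inv_cancel₀ (hN.pos hz).ne', one_smul]

lemma eq_zero_of_forall_nsmul_le (hN : IsNorm N) {x : ℝ × ℝ} {C : ℝ}
    (h : ∀ n : ℕ, N (n • x) ≤ C) : x = 0 := by
  by_contra hx
  obtain ⟨n, hn⟩ := exists_nat_gt (C / N x)
  have hCn := h n
  rw [← Nat.cast_smul_eq_nsmul ℝ, hN.smul_eq, Nat.abs_cast] at hCn
  rw [div_lt_iff₀ (hN.pos hx)] at hn
  linarith

lemma exists_le_mul_norm (hN : IsNorm N) : ∃ C, ∀ x : ℝ × ℝ, N x ≤ C * ‖x‖ := by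
  refine ⟨N (1, 0) + N (0, 1), fun x => ?_⟩
  have hx : x = x.1 • ((1, 0) : ℝ × ℝ) + x.2 • ((0, 1) : ℝ × ℝ) := by ext <;> simp
  have h := hN.add_le (x.1 • ((1, 0) : ℝ × ℝ)) (x.2 • ((0, 1) : ℝ × ℝ))
  rw [← hx, hN.smul_eq, hN.smul_eq] at h
  have h1 : |x.1| ≤ ‖x‖ := norm_fst_le x
  have h2 : |x.2| ≤ ‖x‖ := norm_snd_le x
  nlinarith [hN.nonneg (1, 0), hN.nonneg (0, 1)]

lemma continuous (hN : IsNorm N) : Continuous N := by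
  obtain ⟨C, hC⟩ := hN.exists_le_mul_norm
  refine (LipschitzWith.of_le_add_mul' C fun x y => ?_).continuous
  have h := hN.add_le (x - y) y
  rw [sub_add_cancel] at h
  rw [dist_eq_norm]
  linarith [hC (x - y)]

lemma exists_pos_mul_norm_le (hN : IsNorm N) : ∃ c > 0, ∀ x : ℝ × ℝ, c * ‖x‖ ≤ N x := by
  obtain ⟨x₀, hx₀, hmin⟩ := (isCompact_sphere (0 : ℝ × ℝ) 1).exists_isMinOn
    (NormedSpace.sphere_nonempty.mpr zero_le_one) hN.continuous.continuousOn
  rw [mem_sphere_zero_iff_norm] at hx₀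
  refine ⟨N x₀, hN.pos (norm_pos_iff.mp (hx₀ ▸ one_pos)), fun x => ?_⟩
  rcases eq_or_ne x 0 with rfl | hx
  · simp [hN.map_zero]
  have hxpos : 0 < ‖x‖ := norm_pos_iff.mpr hx
  have h := hmin (show ‖x‖⁻¹ • x ∈ Metric.sphere (0 : ℝ × ℝ) 1 by
    rw [mem_sphere_zero_iff_norm, norm_smul, norm_inv, norm_norm, inv_mul_cancel₀ hxpos.ne'])
  rw [mem_ofPred_eq, hN.smul_eq, abs_inv, abs_norm, le_inv_mul_iff₀ hxpos] at h
  rwa [mul_comm]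

lemma isBounded_setOf_le (hN : IsNorm N) (r : ℝ) : Bornology.IsBounded {x | N x ≤ r} := by
  obtain ⟨c, hc, hle⟩ := hN.exists_pos_mul_norm_le
  refine (Metric.isBounded_closedBall (x := 0) (r := r / c)).subset fun x hx => ?_
  rw [mem_closedBall_zero_iff, le_div_iff₀ hc, mul_comm]
  exact (hle x).trans hx

lemma isCompact_sphere (hN : IsNorm N) : IsCompact {x | N x = 1} :=
  Metric.isCompact_of_isClosed_isBounded (isClosed_eq hN.continuous continuous_const)
    ((hN.isBounded_setOf_le 1).subset fun _ hx => le_of_eq hx)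

lemma isConnected_sphere (hN : IsNorm N) : IsConnected {x | N x = 1} := by
  have hrank : 1 < Module.rank ℝ (ℝ × ℝ) := by rw [rank_prod', Module.rank_self]; norm_num
  have himage : (fun x => (N x)⁻¹ • x) '' {0}ᶜ = {x | N x = 1} := by
    refine Subset.antisymm (image_subset_iff.mpr fun x hx => hN.map_inv_smul_self hx)
      fun u hu => ⟨u, hN.ne_zero_of_eq_one hu, by simp [show N u = 1 from hu]⟩
  rw [← himage]
  exact (isConnected_compl_singleton_of_one_lt_rank hrank 0).image _
    ((hN.continuous.continuousOn.inv₀ fun x hx => (hN.pos hx).ne').smul continuousOn_id)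

lemma map_sub_le_one_of_eq_smul (hN : IsNorm N) {z a : ℝ × ℝ} (ha : N a = 1)
    (hza : z = N z • a) (hz : N z ≤ 2) : N (z - a) ≤ 1 := by
  rw [show z - a = (N z - 1) • a by rw [sub_smul, one_smul, ← hza], hN.smul_eq, ha, mul_one,
    abs_le]
  constructor <;> linarith [hN.nonneg z]

lemma exists_add_eq_of_le_two (hN : IsNorm N) {z : ℝ × ℝ} (hz : N z ≤ 2) :
    ∃ u₁ u₂, N u₁ = 1 ∧ N u₂ = 1 ∧ u₁ + u₂ = z := by
  obtain ⟨a, ha, hza⟩ := hN.exists_eq_smul_unit z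
  have h₂ : 1 ≤ N (z - -a) := by
    rw [sub_neg_eq_add, show z + a = (N z + 1) • a by rw [add_smul, one_smul, ← hza],
      hN.smul_eq, ha, mul_one, abs_of_nonneg (by linarith [hN.nonneg z])]
    linarith [hN.nonneg z]
  obtain ⟨u, hu, hzu⟩ := hN.isConnected_sphere.isPreconnected.intermediate_value ha
    (show N (-a) = 1 by rwa [hN.map_neg])
    (hN.continuous.comp (continuous_const.sub continuous_id)).continuousOn
    ⟨hN.map_sub_le_one_of_eq_smul ha hza hz, h₂⟩
  exact ⟨u, z - u, hu, hzu, add_sub_cancel u z⟩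

lemma closure_sphere_eq_top (hN : IsNorm N) : AddSubmonoid.closure {u | N u = 1} = ⊤ := by
  refine eq_top_iff.mpr fun z _ => ?_
  set n := ⌈N z⌉₊ + 1
  have hn : (0 : ℝ) < n := by positivity
  obtain ⟨u₁, u₂, h₁, h₂, h⟩ := hN.exists_add_eq_of_le_two (z := (n : ℝ)⁻¹ • z) (by
    rw [hN.smul_eq, abs_inv, Nat.abs_cast, inv_mul_le_iff₀ hn]
    have := Nat.le_ceil (N z)
    push_cast [n]
    linarith [hN.nonneg z])
  rw [show z = n • (u₁ + u₂) by rw [h, ← Nat.cast_smul_eq_nsmul ℝ, smul_inv_smul₀ hn.ne']]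
  exact AddSubmonoid.nsmul_mem _
    (add_mem (AddSubmonoid.subset_closure (show u₁ ∈ {u | N u = 1} from h₁))
      (AddSubmonoid.subset_closure (show u₂ ∈ {u | N u = 1} from h₂))) n

lemma map_apply_eq_of_unit (hN : IsNorm N) (L : (ℝ × ℝ) →ₗ[ℝ] (ℝ × ℝ))
    (hL : ∀ u, N u = 1 → N (L u) = 1) (z : ℝ × ℝ) : N (L z) = N z := by
  obtain ⟨a, ha, hza⟩ := hN.exists_eq_smul_unit z
  rw [hza, L.map_smul, hN.smul_eq, hN.smul_eq, hL a ha, ha]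

end IsNorm

def apexSet (N : ℝ × ℝ → ℝ) (a b : ℝ × ℝ) : Set (ℝ × ℝ) :=
  {x | N (a - x) = 1 ∧ N (b - x) = 1}

section Apex

variable {N : ℝ × ℝ → ℝ}

lemma mem_apexSet_zero (hN : IsNorm N) {u w : ℝ × ℝ} :
    w ∈ apexSet N 0 u ↔ N w = 1 ∧ N (u - w) = 1 := by
  rw [apexSet, mem_ofPred_eq, zero_sub, hN.map_neg]

lemma add_sub_mem_apexSet (hN : IsNorm N) {a b x : ℝ × ℝ} (hx : x ∈ apexSet N a b) :
    a + b - x ∈ apexSet N a b := by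
  refine ⟨?_, ?_⟩
  · rw [show a - (a + b - x) = x - b by abel, hN.map_sub_rev]; exact hx.2
  · rw [show b - (a + b - x) = x - a by abel, hN.map_sub_rev]; exact hx.1

lemma IsURTC.encard_apexSet (hU : IsURTC N) {a b : ℝ × ℝ} (hab : N (a - b) = 1) :
    (apexSet N a b).encard = 2 :=
  hU a b hab

lemma IsURTC.apexSet_eq (hU : IsURTC N) (hN : IsNorm N) {a b x : ℝ × ℝ} (hab : N (a - b) = 1)
    (hx : x ∈ apexSet N a b) : apexSet N a b = {x, a + b - x} := by
  have hne : x ≠ a + b - x := by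
    intro h
    have h2 := hN.map_add_self (a - x)
    rw [show a - x + (a - x) = a - b by nth_rewrite 2 [h]; abel, hab, hx.1] at h2
    norm_num at h2
  refine ((toFinite _).eq_of_subset_of_encard_le ?_ ?_).symm
  · exact insert_subset hx (singleton_subset_iff.mpr (add_sub_mem_apexSet hN hx))
  · rw [hU.encard_apexSet hab, encard_pair hne]

lemma IsURTC.eq_add_sub_of_mem_apexSet (hU : IsURTC N) (hN : IsNorm N) {a b x y : ℝ × ℝ}
    (hab : N (a - b) = 1) (hx : x ∈ apexSet N a b) (hy : y ∈ apexSet N a b) (hxy : x ≠ y) :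
    y = a + b - x := by
  have := hU.apexSet_eq hN hab hx ▸ hy
  simpa [Ne.symm hxy] using this

lemma IsURTC.nonempty_apexSet (hU : IsURTC N) {a b : ℝ × ℝ} (hab : N (a - b) = 1) :
    (apexSet N a b).Nonempty := by
  rw [← encard_pos, hU.encard_apexSet hab]; norm_num

lemma IsURTC.false_of_unit_quadruple (hU : IsURTC N) (hN : IsNorm N) {p q c d : ℝ × ℝ}
    (hpq : N (p - q) = 1) (hpc : N (p - c) = 1) (hpd : N (p - d) = 1)
    (hcq : N (c - q) = 1) (hdq : N (d - q) = 1) (hcd : N (c - d) = 1) : False := by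
  have hd : d = p + c - q := hU.eq_add_sub_of_mem_apexSet hN hpc ⟨hpq, hcq⟩
    ⟨hpd, hcd⟩ (fun h => by simp [h, hN.map_zero] at hdq)
  have hc : c = p + d - q := hU.eq_add_sub_of_mem_apexSet hN hpd ⟨hpq, hdq⟩
    ⟨hpc, by rwa [hN.map_sub_rev]⟩ (fun h => by simp [h, hN.map_zero] at hcq)
  have h2 := hN.map_add_self (c - d)
  have h0 : c - d + (c - d) = 0 := calc
    c - d + (c - d) = (p + d - q - d) + (c - (p + c - q)) := by rw [← hc, ← hd]
    _ = 0 := by abel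
  rw [h0, hN.map_zero, hcd] at h2
  norm_num at h2

end Apex

def unitTriangles (N : ℝ × ℝ → ℝ) : Set ((ℝ × ℝ) × (ℝ × ℝ)) :=
  {p | N p.1 = 1 ∧ p.2 ∈ apexSet N 0 p.1}

section UnitTriangles

variable {N : ℝ × ℝ → ℝ}

lemma sub_mem_unitTriangles (hN : IsNorm N) {u w : ℝ × ℝ} (h : (u, w) ∈ unitTriangles N) :
    (u, u - w) ∈ unitTriangles N :=
  ⟨h.1, by simpa using add_sub_mem_apexSet hN h.2⟩

lemma isCompact_unitTriangles (hN : IsNorm N) : IsCompact (unitTriangles N) := by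
  have hN_cont := hN.continuous
  refine (hN.isCompact_sphere.prod hN.isCompact_sphere).of_isClosed_subset ?_
    fun p hp => ⟨hp.1, ((mem_apexSet_zero hN).mp hp.2).1⟩
  exact (isClosed_eq (by fun_prop) continuous_const).inter
    ((isClosed_eq (by fun_prop) continuous_const).inter
      (isClosed_eq (by fun_prop) continuous_const))

lemma IsURTC.exists_mem_unitTriangles (hU : IsURTC N) (hN : IsNorm N) {u : ℝ × ℝ}
    (hu : N u = 1) : ∃ w, (u, w) ∈ unitTriangles N :=
  (hU.nonempty_apexSet (a := 0) (b := u) (by rwa [zero_sub, hN.map_neg])).imp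
    fun _ hw => ⟨hu, hw⟩

/-- Intermediate value theorem for the two-valued map sending a unit vector `u` to the apexes
of the unit triangles on `0, u`. -/
lemma IsURTC.exists_mem_unitTriangles_eq (hU : IsURTC N) (hN : IsNorm N)
    {f : (ℝ × ℝ) × (ℝ × ℝ) → ℝ} (hf : Continuous f) {c : ℝ} {u₀ w₀ u₁ : ℝ × ℝ}
    (h₀ : (u₀, w₀) ∈ unitTriangles N) (hf₀ : f (u₀, w₀) ≤ c)
    (hu₁ : N u₁ = 1) (hf₁ : ∀ w ∈ apexSet N 0 u₁, c ≤ f (u₁, w)) :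
    ∃ p ∈ unitTriangles N, f p = c := by
  have hclosed : ∀ C, IsClosed C → IsClosed (Prod.fst '' (unitTriangles N ∩ C)) := fun C hC =>
    (((isCompact_unitTriangles hN).inter_right hC).image continuous_fst).isClosed
  set A := Prod.fst '' (unitTriangles N ∩ {p | f p ≤ c})
  -- `w` and `u - w` are all the apexes over `0, u`
  set B := Prod.fst '' (unitTriangles N ∩ {p | c ≤ f p ∧ c ≤ f (p.1, p.1 - p.2)})
  have hA : IsClosed A := hclosed _ (isClosed_le hf continuous_const)
  have hB : IsClosed B := hclosed _ ((isClosed_le continuous_const hf).inter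
    (isClosed_le continuous_const (hf.comp (by fun_prop))))
  have hcover : {u | N u = 1} ⊆ A ∪ B := by
    intro u hu
    obtain ⟨w, hw⟩ := hU.exists_mem_unitTriangles hN hu
    by_cases h1 : f (u, w) ≤ c
    · exact Or.inl ⟨(u, w), ⟨hw, h1⟩, rfl⟩
    by_cases h2 : f (u, u - w) ≤ c
    · exact Or.inl ⟨(u, u - w), ⟨sub_mem_unitTriangles hN hw, h2⟩, rfl⟩
    · exact Or.inr ⟨(u, w), ⟨hw, le_of_not_ge h1, le_of_not_ge h2⟩, rfl⟩
  have hB₁ : u₁ ∈ B := by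
    obtain ⟨w, hw⟩ := hU.exists_mem_unitTriangles hN hu₁
    exact ⟨(u₁, w), ⟨hw, hf₁ w hw.2, hf₁ _ (sub_mem_unitTriangles hN hw).2⟩, rfl⟩
  obtain ⟨v, -, ⟨⟨x, w⟩, ⟨hw, hfw⟩, rfl⟩, ⟨⟨u, w'⟩, ⟨hw', hfw'⟩, hu⟩⟩ :=
    isPreconnected_closed_iff.mp hN.isConnected_sphere.isPreconnected A B hA hB hcover
      ⟨u₀, h₀.1, (u₀, w₀), ⟨h₀, hf₀⟩, rfl⟩ ⟨u₁, hu₁, hB₁⟩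
  dsimp only at hu
  subst hu
  refine ⟨(u, w), hw, le_antisymm hfw ?_⟩
  have hu : N (0 - u) = 1 := by rw [zero_sub, hN.map_neg]; exact hw.1
  rcases hU.apexSet_eq hN hu hw'.2 ▸ hw.2 with h | h
  · obtain rfl : w = w' := h
    exact hfw'.1
  · obtain rfl : w = u - w' := by simpa using h
    exact hfw'.2

/-- `w + w - u = w - (u - w)` is the difference of the two apexes over `0, u`. -/
lemma IsURTC.exists_apexDiff_dist_eq_one (hU : IsURTC N) (hN : IsNorm N)
    {u₀ w₀ : ℝ × ℝ} (h₀ : (u₀, w₀) ∈ unitTriangles N) :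
    ∃ p ∈ unitTriangles N, N (p.2 + p.2 - p.1 - (w₀ + w₀ - u₀)) = 1 := by
  have hs₀_le : N (w₀ + w₀ - u₀) ≤ 2 := by
    obtain ⟨hw₀, hu₀w₀⟩ : N w₀ = 1 ∧ N (u₀ - w₀) = 1 := (mem_apexSet_zero hN).mp h₀.2
    have h := hN.add_le w₀ (w₀ - u₀)
    rw [show w₀ + (w₀ - u₀) = w₀ + w₀ - u₀ by abel, hw₀, hN.map_sub_rev w₀, hu₀w₀] at h
    linarith
  set s₀ := w₀ + w₀ - u₀
  have hN_cont := hN.continuous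
  obtain ⟨η, hη, hs₀⟩ := hN.exists_eq_smul_unit s₀
  have hs₀η : N (s₀ - η) ≤ 1 := hN.map_sub_le_one_of_eq_smul hη hs₀ hs₀_le
  refine hU.exists_mem_unitTriangles_eq hN (f := fun p => N (p.2 + p.2 - p.1 - s₀))
    (by fun_prop) h₀ (by simp [s₀, hN.map_zero]) hη fun w hw => ?_
  have h := hN.add_le (w + w - η - s₀) (s₀ - η)
  rw [show w + w - η - s₀ + (s₀ - η) = (w - η) + (w - η) by abel, hN.map_add_self,
    hN.map_sub_rev, ((mem_apexSet_zero hN).mp hw).2] at h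
  dsimp only
  linarith

end UnitTriangles


def PreservesUnitDist (N : ℝ × ℝ → ℝ) (φ : ℝ × ℝ → ℝ × ℝ) : Prop :=
  ∀ x y, N (x - y) = 1 → N (φ x - φ y) = 1

namespace PreservesUnitDist

variable {N : ℝ × ℝ → ℝ} {φ : ℝ × ℝ → ℝ × ℝ}

lemma mapsTo_apexSet (hφ : PreservesUnitDist N φ) (a b : ℝ × ℝ) :
    MapsTo φ (apexSet N a b) (apexSet N (φ a) (φ b)) :=
  fun _ hx => ⟨hφ _ _ hx.1, hφ _ _ hx.2⟩

lemma map_sub_le_two (hφ : PreservesUnitDist N φ) (hN : IsNorm N) {x y : ℝ × ℝ}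
    (h : N (x - y) ≤ 2) : N (φ x - φ y) ≤ 2 := by
  obtain ⟨u₁, u₂, h₁, h₂, hxy⟩ := hN.exists_add_eq_of_le_two h
  have hx : N (x - (y + u₁)) = 1 := by rwa [← sub_sub, ← hxy, add_sub_cancel_left]
  have hy : N (y + u₁ - y) = 1 := by rwa [add_sub_cancel_left]
  linarith [hN.map_sub_le (φ x) (φ (y + u₁)) (φ y), hφ _ _ hx, hφ _ _ hy]

/-- If `φ p = φ q`, pick apexes `q, q'` of another unit segment `c', d'` with `N (q' - p) = 1`;
then `φ q, φ q', φ c', φ d'` are four points at pairwise unit distance. -/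
lemma map_ne_map_of_mem_apexSet (hφ : PreservesUnitDist N φ) (hU : IsURTC N) (hN : IsNorm N)
    {c d p q : ℝ × ℝ} (hcd : N (c - d) = 1) (hp : p ∈ apexSet N c d) (hq : q ∈ apexSet N c d)
    (hpq : p ≠ q) : φ p ≠ φ q := by
  intro heq
  have hq_eq : q = c + d - p := hU.eq_add_sub_of_mem_apexSet hN hcd hp hq hpq
  have h₀ : (d - c, p - c) ∈ unitTriangles N := by
    refine ⟨by rwa [hN.map_sub_rev], ?_⟩
    rw [mem_apexSet_zero hN, hN.map_sub_rev, sub_sub_sub_cancel_right]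
    exact hp
  obtain ⟨⟨u, w⟩, ⟨hu, hw⟩, hstep⟩ := hU.exists_apexDiff_dist_eq_one hN h₀
  dsimp only at hu hw hstep
  obtain ⟨hw, huw⟩ := (mem_apexSet_zero hN).mp hw
  have unit : ∀ x y z, x - y = z → N z = 1 → N (φ x - φ y) = 1 :=
    fun x y z h hz => hφ x y (h ▸ hz)
  have hu' : N (-u) = 1 := by rwa [hN.map_neg]
  have hw' : N (-w) = 1 := by rwa [hN.map_neg]
  refine hU.false_of_unit_quadruple hN (p := φ q) (q := φ (q + (w + w - u)))
    (c := φ (q + w - u)) (d := φ (q + w)) ?_ (unit _ _ _ (by abel) huw) (unit _ _ _ (by abel) hw')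
    (unit _ _ _ (by abel) hw') (unit _ _ _ (by abel) huw) (unit _ _ _ (by abel) hu')
  rw [← heq, hN.map_sub_rev]
  refine unit _ _ _ ?_ hstep
  rw [hq_eq]
  abel

lemma map_add_add_eq (hφ : PreservesUnitDist N φ) (hU : IsURTC N) (hN : IsNorm N)
    {v w : ℝ × ℝ} (h : (v, w) ∈ unitTriangles N) (a : ℝ × ℝ) :
    φ a + φ (a + v + w) = φ (a + v) + φ (a + w) := by
  obtain ⟨hv, hw, hvw⟩ : N v = 1 ∧ N w = 1 ∧ N (v - w) = 1 :=
    ⟨h.1, (mem_apexSet_zero hN).mp h.2⟩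
  have hvw' : N (a + v - (a + w)) = 1 := by rwa [add_sub_add_left_eq_sub]
  have ha : a ∈ apexSet N (a + v) (a + w) := by
    constructor <;> rwa [add_sub_cancel_left]
  have ha' : a + v + w ∈ apexSet N (a + v) (a + w) := by
    constructor
    · rwa [show a + v - (a + v + w) = -w by abel, hN.map_neg]
    · rwa [show a + w - (a + v + w) = -v by abel, hN.map_neg]
  have hne : a ≠ a + v + w := by
    intro h
    rw [show w = -v by rw [add_assoc, left_eq_add] at h; exact eq_neg_of_add_eq_zero_right h,
      sub_neg_eq_add, hN.map_add_self, hv] at hvw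
    norm_num at hvw
  have := hU.eq_add_sub_of_mem_apexSet hN (hφ _ _ hvw') (hφ.mapsTo_apexSet _ _ ha)
    (hφ.mapsTo_apexSet _ _ ha') (hφ.map_ne_map_of_mem_apexSet hU hN hvw' ha ha' hne)
  rw [this]
  abel

lemma map_add_add_sub (hφ : PreservesUnitDist N φ) (hU : IsURTC N) (hN : IsNorm N)
    {v : ℝ × ℝ} (hv : N v = 1) (a : ℝ × ℝ) :
    φ (a + v + v) - φ (a + v) = φ (a + v) - φ a := by
  obtain ⟨w, hw⟩ := hU.exists_mem_unitTriangles hN hv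
  have h₁ := hφ.map_add_add_eq hU hN hw a
  have h₂ := hφ.map_add_add_eq hU hN (sub_mem_unitTriangles hN hw) (a + w)
  rw [show a + w + v + (v - w) = a + v + v by abel, show a + w + (v - w) = a + v by abel,
    show a + w + v = a + v + w by abel] at h₂
  linear_combination h₂ + h₁

lemma map_add_nsmul (hφ : PreservesUnitDist N φ) (hU : IsURTC N) (hN : IsNorm N)
    {v : ℝ × ℝ} (hv : N v = 1) (a : ℝ × ℝ) (n : ℕ) :
    φ (a + n • v) = φ a + n • (φ (a + v) - φ a) := by
  have hstep : ∀ n : ℕ, φ (a + n • v + v) - φ (a + n • v) = φ (a + v) - φ a := by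
    intro n
    induction n with
    | zero => simp
    | succ n ih => rw [succ_nsmul, ← add_assoc, hφ.map_add_add_sub hU hN hv, ih]
  induction n with
  | zero => simp
  | succ n ih =>
    have h := hstep n
    rw [ih] at h
    rw [succ_nsmul, ← add_assoc, succ_nsmul, sub_eq_iff_eq_add.mp h]
    abel

lemma exists_bound_map_add_sub (hφ : PreservesUnitDist N φ) (hN : IsNorm N) (z : ℝ × ℝ) :
    ∃ K, ∀ x, N (φ (x + z) - φ x) ≤ K := by
  have hz : z ∈ AddSubmonoid.closure {u | N u = 1} := hN.closure_sphere_eq_top ▸ trivial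
  induction hz using AddSubmonoid.closure_induction with
  | mem u hu => exact ⟨1, fun x => (hφ _ _ (by rwa [add_sub_cancel_left])).le⟩
  | zero => exact ⟨0, fun x => by simp [hN.map_zero]⟩
  | add y z _ _ hy hz =>
    obtain ⟨K₁, hK₁⟩ := hy
    obtain ⟨K₂, hK₂⟩ := hz
    refine ⟨K₂ + K₁, fun x => ?_⟩
    rw [← add_assoc]
    linarith [hN.map_sub_le (φ (x + y + z)) (φ (x + y)) (φ x), hK₁ x, hK₂ (x + y)]

/-- The step `φ (a + v) - φ a` is constant along the line `a + ℕ • v`, so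
`φ (b + n • v) - φ (a + n • v)` would grow linearly in `n` if the steps at `a` and `b` differed;
but it stays bounded. -/
lemma map_add_sub_eq_of_unit (hφ : PreservesUnitDist N φ) (hU : IsURTC N) (hN : IsNorm N)
    {v : ℝ × ℝ} (hv : N v = 1) (a b : ℝ × ℝ) :
    φ (a + v) - φ a = φ (b + v) - φ b := by
  obtain ⟨K, hK⟩ := hφ.exists_bound_map_add_sub hN (b - a)
  refine (sub_eq_zero.mp (hN.eq_zero_of_forall_nsmul_le (C := K + N (φ b - φ a))
    fun n => ?_)).symm
  have h := hK (a + n • v)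
  rw [show a + n • v + (b - a) = b + n • v by abel] at h
  calc N (n • (φ (b + v) - φ b - (φ (a + v) - φ a)))
      = N ((φ (b + n • v) - φ (a + n • v)) + -(φ b - φ a)) := by
        rw [hφ.map_add_nsmul hU hN hv a, hφ.map_add_nsmul hU hN hv b]; congr 1; module
    _ ≤ N (φ (b + n • v) - φ (a + n • v)) + N (-(φ b - φ a)) := hN.add_le _ _
    _ ≤ K + N (φ b - φ a) := by rw [hN.map_neg]; linarith

lemma map_add_sub_eq (hφ : PreservesUnitDist N φ) (hU : IsURTC N) (hN : IsNorm N)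
    (z x : ℝ × ℝ) : φ (x + z) - φ x = φ z - φ 0 := by
  have hz : z ∈ AddSubmonoid.closure {u | N u = 1} := hN.closure_sphere_eq_top ▸ trivial
  induction hz using AddSubmonoid.closure_induction generalizing x with
  | mem u hu => simpa using hφ.map_add_sub_eq_of_unit hU hN hu x 0
  | zero => simp
  | add y z _ _ hy hz =>
    rw [← add_assoc]
    linear_combination hz (x + y) + hy x - hz y

end PreservesUnitDist

/-- If `N` is a URTC-norm on `ℝ²` and `φ` preserves unit distance,
then `φ` is an affine isometry. -/
theorem aleksandrov_URTC (N : ℝ × ℝ → ℝ) (hN : IsNorm N) (hU : IsURTC N)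
    (φ : ℝ × ℝ → ℝ × ℝ)
    (hφ : ∀ x y : ℝ × ℝ, N (x - y) = 1 → N (φ x - φ y) = 1) :
    (∀ x y : ℝ × ℝ, N (φ x - φ y) = N (x - y)) ∧
      ∃ (L : (ℝ × ℝ) →ₗ[ℝ] (ℝ × ℝ)) (t : ℝ × ℝ), ∀ x : ℝ × ℝ, φ x = L x + t := by
  have hφ' : PreservesUnitDist N φ := hφ
  let Δ : (ℝ × ℝ) →+ (ℝ × ℝ) := AddMonoidHom.mk' (fun z => φ z - φ 0) fun x y => by
    linear_combination hφ'.map_add_sub_eq hU hN y x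
  have hΔ : ∀ x y, φ x - φ y = Δ (x - y) := fun x y => by
    have h := hφ'.map_add_sub_eq hU hN (x - y) y
    rwa [add_sub_cancel] at h
  have hcont : Continuous Δ := Δ.continuous_of_isBounded_nhds_zero
    (hN.continuous.continuousAt.preimage_mem_nhds
      (Iic_mem_nhds (show N 0 < 2 by norm_num [hN.map_zero])))
    ((hN.isBounded_setOf_le 2).subset (image_subset_iff.mpr fun z hz =>
      hφ'.map_sub_le_two hN (by rwa [sub_zero])))
  let L := (Δ.toRealLinearMap hcont).toLinearMap
  refine ⟨fun x y => ?_, L, φ 0, fun x => ?_⟩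
  · rw [hΔ]
    exact hN.map_apply_eq_of_unit L (fun u hu => hφ u 0 (by rwa [sub_zero])) (x - y)
  · simp [L, Δ]
end

section
/- Let ‖·‖ be a URTC-norm on ℝ² with unit sphere S, and let f : S → S be the map sending each z ∈ S to the unique point f(z) ∈ S with ‖z − f(z)‖ = 1 and det(z, f(z)) > 0. Then f is a bijection of S onto itself, whose inverse g satisfies ‖z − g(z)‖ = 1 and det(g(z), z) > 0 for all z ∈ S. -/
/-!
If `‖w‖ = 1` and `x` is a unit vector with `‖w - x‖ = 1`, then `w - x` is another such point,
distinct from `x` (else `‖w‖ = 2`); the URTC property says there are no others. Since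
`det (w, w - x) = -det (w, x)`, exactly one of the two lies counterclockwise from `w`, so `f w`
is characterised by this sign condition. Checking it shows `f (z - f z) = z` and
`f (f z) = f z - z`, so `g z = z - f z` is a two-sided inverse of `f` on the sphere.
-/

def det (z w : ℝ × ℝ) : ℝ := z.1 * w.2 - z.2 * w.1

lemma det_sub_right (w x : ℝ × ℝ) : det w (w - x) = -det w x := by
  simp only [det, Prod.fst_sub, Prod.snd_sub]
  ring

namespace IsNorm

variable {N : ℝ × ℝ → ℝ}

lemma neg (hN : IsNorm N) (v : ℝ × ℝ) : N (-v) = N v := by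
  simpa using hN.smul_eq (-1) v

lemma sub_comm (hN : IsNorm N) (a b : ℝ × ℝ) : N (a - b) = N (b - a) := by
  rw [← hN.neg, neg_sub]

lemma ne_sub_of_norm_eq_one {w x : ℝ × ℝ} (hN : IsNorm N) (hw : N w = 1) (hx : N x = 1) :
    x ≠ w - x := by
  intro h
  have hw2 : w = (2 : ℝ) • x := by rw [two_smul, ← sub_eq_iff_eq_add.mp h.symm]
  have : N w = 2 := by rw [hw2, hN.smul_eq, hx]; norm_num
  linarith

end IsNorm

namespace IsURTC

variable {N : ℝ × ℝ → ℝ}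

lemma unit_neighbours_eq_pair (hN : IsNorm N) (hU : IsURTC N) {w x : ℝ × ℝ} (hw : N w = 1)
    (hx : N x = 1) (hwx : N (w - x) = 1) :
    {v : ℝ × ℝ | N (w - v) = 1 ∧ N v = 1} = {x, w - x} := by
  have hcard : {v : ℝ × ℝ | N (w - v) = 1 ∧ N v = 1}.encard = 2 := by
    simpa only [sub_zero, zero_sub, hN.neg] using hU w 0 (by simpa using hw)
  have hfin : {v : ℝ × ℝ | N (w - v) = 1 ∧ N v = 1}.Finite := by
    simp [← Set.encard_ne_top_iff, hcard]
  have hsub : ({x, w - x} : Set (ℝ × ℝ)) ⊆ {v | N (w - v) = 1 ∧ N v = 1} := by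
    rintro v (rfl | rfl)
    · exact ⟨hwx, hx⟩
    · exact ⟨by simpa using hx, hwx⟩
  refine (hfin.eq_of_subset_of_encard_le' hsub ?_).symm
  rw [hcard, Set.encard_pair (hN.ne_sub_of_norm_eq_one hw hx)]

lemma eq_of_ccw_unit_neighbour (hN : IsNorm N) (hU : IsURTC N) {w x y : ℝ × ℝ} (hw : N w = 1)
    (hx : N x = 1) (hwx : N (w - x) = 1) (hdx : 0 < det w x)
    (hy : N y = 1) (hwy : N (w - y) = 1) (hdy : 0 < det w y) : y = x := by
  have hmem : y ∈ ({x, w - x} : Set (ℝ × ℝ)) := by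
    rw [← unit_neighbours_eq_pair hN hU hw hx hwx]
    exact ⟨hwy, hy⟩
  rcases hmem with rfl | rfl
  · rfl
  · rw [det_sub_right] at hdy
    linarith

end IsURTC

/-- For a URTC-norm, the map `f` sending each unit vector `z` to its counterclockwise
unit-distance neighbour is a bijection of the unit sphere onto itself, and it has
an inverse `g` on the sphere satisfying `N (z - g z) = 1` and `det (g z, z) > 0`. -/
theorem ccw_map_bijective (N : ℝ × ℝ → ℝ) (hN : IsNorm N) (hU : IsURTC N)
    (f : ℝ × ℝ → ℝ × ℝ)
    (hf : ∀ z : ℝ × ℝ, N z = 1 →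
      N (f z) = 1 ∧ N (z - f z) = 1 ∧ 0 < z.1 * (f z).2 - z.2 * (f z).1) :
    Set.BijOn f {x : ℝ × ℝ | N x = 1} {x : ℝ × ℝ | N x = 1} ∧
      ∃ g : ℝ × ℝ → ℝ × ℝ,
        Set.MapsTo g {x : ℝ × ℝ | N x = 1} {x : ℝ × ℝ | N x = 1} ∧
        Set.InvOn g f {x : ℝ × ℝ | N x = 1} {x : ℝ × ℝ | N x = 1} ∧
        ∀ z : ℝ × ℝ, N z = 1 →
          N (z - g z) = 1 ∧ 0 < (g z).1 * z.2 - (g z).2 * z.1 := by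
  have apply_eq {w x : ℝ × ℝ} (hw : N w = 1) (hx : N x = 1) (hwx : N (w - x) = 1)
      (hdx : 0 < det w x) : f w = x :=
    hU.eq_of_ccw_unit_neighbour hN hw hx hwx hdx (hf w hw).1 (hf w hw).2.1 (hf w hw).2.2
  have apply_sub_self {z : ℝ × ℝ} (hz : N z = 1) : f (z - f z) = z := by
    obtain ⟨hfz, hzfz, hdet⟩ := hf z hz
    refine apply_eq hzfz hz ?_ ?_
    · rwa [sub_sub_cancel_left, hN.neg]
    · simp only [det, Prod.fst_sub, Prod.snd_sub]
      linarith
  have apply_apply {z : ℝ × ℝ} (hz : N z = 1) : f (f z) = f z - z := by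
    obtain ⟨hfz, hzfz, hdet⟩ := hf z hz
    refine apply_eq hfz (by rwa [hN.sub_comm]) (by rwa [sub_sub_cancel]) ?_
    simp only [det, Prod.fst_sub, Prod.snd_sub]
    linarith
  have maps_f : Set.MapsTo f {x | N x = 1} {x | N x = 1} := fun z hz => (hf z hz).1
  have maps_g : Set.MapsTo (fun z => z - f z) {x | N x = 1} {x | N x = 1} :=
    fun z hz => (hf z hz).2.1
  have inv : Set.InvOn (fun z => z - f z) f {x | N x = 1} {x | N x = 1} :=
    ⟨fun z hz => by simp only [apply_apply hz, sub_sub_cancel], fun z hz => apply_sub_self hz⟩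
  refine ⟨inv.bijOn maps_f maps_g, fun z => z - f z, maps_g, inv, fun z hz => ?_⟩
  obtain ⟨hfz, -, hdet⟩ := hf z hz
  refine ⟨by rwa [sub_sub_cancel], ?_⟩
  simp only [Prod.fst_sub, Prod.snd_sub]
  linarith
end
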